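/- arXiv:2109.11088 — 5 statements merged into one kernel-verified Lean document; each statement's English description precedes it below -/
import Mathlib

section
/- Let f : ℝ^n × ℝ^m → ℝ^n be homogeneous of degree ν > 0 with respect to the dilation pair (λ^r, λ^q), i.e., f(λ^r(ε)x, λ^q(ε)u) = λ^r(ε)^ν f(x,u) for all x, u, ε > 0. Then for any initial state x, any input sequence u = (u_0, u_1, ...), any ε > 0, and any time k ≥ 0, the solution of x⁺ = f(x,u) satisfies φ(k, λ^r(ε)x, Λ(ε)u) = λ^r(ε)^(ν^k) φ(k, x, u), where Λ(ε)u denotes the scaled input sequence whose k-th element is λ^q(ε)^(ν^k) u_k. -/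
noncomputable section

/-- Dilation map `λ^r(ε)x = (ε^{r_1}x_1, ..., ε^{r_n}x_n)`. -/
def dil {n : ℕ} (r : Fin n → ℝ) (ε : ℝ) (x : Fin n → ℝ) : Fin n → ℝ :=
  fun i => ε ^ (r i) * x i

/-- Powered dilation `λ^r(ε)^c x = (ε^{c r_1}x_1, ..., ε^{c r_n}x_n)`. -/
def dilPow {n : ℕ} (r : Fin n → ℝ) (ε c : ℝ) (x : Fin n → ℝ) : Fin n → ℝ :=
  fun i => ε ^ (c * r i) * x i

/-- Solution map of `x⁺ = f(x,u)`: `sol f u x k = φ(k, x, u)`. -/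
def sol {n m : ℕ} (f : (Fin n → ℝ) → (Fin m → ℝ) → Fin n → ℝ)
    (u : ℕ → Fin m → ℝ) (x : Fin n → ℝ) : ℕ → Fin n → ℝ
  | 0 => x
  | k + 1 => f (sol f u x k) (u k)

section Dilation

variable {p : ℕ} (s : Fin p → ℝ) (y : Fin p → ℝ)

lemma dilPow_one (ε : ℝ) : dilPow s ε 1 y = dil s ε y := by
  funext i
  simp only [dilPow, dil, one_mul]

lemma dilPow_eq_dil {ε : ℝ} (hε : 0 < ε) (c : ℝ) : dilPow s ε c y = dil s (ε ^ c) y := by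
  funext i
  simp only [dilPow, dil, Real.rpow_mul hε.le]

lemma dilPow_rpow {ε : ℝ} (hε : 0 < ε) (a b : ℝ) :
    dilPow s (ε ^ a) b y = dilPow s ε (a * b) y := by
  funext i
  simp only [dilPow, ← Real.rpow_mul hε.le, mul_assoc]

end Dilation

lemma map_dilPow_of_homogeneous {n m : ℕ} {f : (Fin n → ℝ) → (Fin m → ℝ) → Fin n → ℝ}
    {r : Fin n → ℝ} {q : Fin m → ℝ} {ν : ℝ}
    (hf : ∀ x u (ε : ℝ), 0 < ε → f (dil r ε x) (dil q ε u) = dilPow r ε ν (f x u))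
    (x : Fin n → ℝ) (u : Fin m → ℝ) {ε : ℝ} (hε : 0 < ε) (c : ℝ) :
    f (dilPow r ε c x) (dilPow q ε c u) = dilPow r ε (c * ν) (f x u) := by
  rw [dilPow_eq_dil r x hε, dilPow_eq_dil q u hε, hf x u _ (Real.rpow_pos_of_pos hε c),
    dilPow_rpow r _ hε]

theorem stmt0_general {n m : ℕ} (f : (Fin n → ℝ) → (Fin m → ℝ) → Fin n → ℝ)
    (r : Fin n → ℝ) (q : Fin m → ℝ) (ν : ℝ)
    (hf : ∀ x u (ε : ℝ), 0 < ε → f (dil r ε x) (dil q ε u) = dilPow r ε ν (f x u)) :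
    ∀ (x : Fin n → ℝ) (u : ℕ → Fin m → ℝ) (ε : ℝ), 0 < ε → ∀ k : ℕ,
      sol f (fun j => dilPow q ε (ν ^ j) (u j)) (dil r ε x) k
        = dilPow r ε (ν ^ k) (sol f u x k) := by
  intro x u ε hε k
  induction k with
  | zero => rw [sol, sol, pow_zero, dilPow_one]
  | succ k ih =>
    rw [sol, sol, ih, map_dilPow_of_homogeneous hf _ _ hε, pow_succ]

theorem stmt0 {n m : ℕ} (f : (Fin n → ℝ) → (Fin m → ℝ) → Fin n → ℝ)
    (r : Fin n → ℝ) (q : Fin m → ℝ) (ν : ℝ)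
    (hr : ∀ i, 0 < r i) (hq : ∀ j, 0 < q j) (hν : 0 < ν)
    (hf : ∀ x u (ε : ℝ), 0 < ε → f (dil r ε x) (dil q ε u) = dilPow r ε ν (f x u)) :
    ∀ (x : Fin n → ℝ) (u : ℕ → Fin m → ℝ) (ε : ℝ), 0 < ε → ∀ k : ℕ,
      sol f (fun j => dilPow q ε (ν ^ j) (u j)) (dil r ε x) k
        = dilPow r ε (ν ^ k) (sol f u x k) :=
  stmt0_general f r q ν hf
end
end

section
/- Suppose f is homogeneous of degree ν = 1 with respect to (λ^r, λ^q) and ℓ, ȷ are homogeneous of degree μ. Under existence of optimal sequences, for every x and ε > 0, V_{d,1,1}(λ^r(ε)x) = ε^μ V_{d,1,1}(x), and if u* is optimal for J_{d,1,1} at x then the sequence with k-th element λ^q(ε)u*_k is optimal for J_{d,1,1} at λ^r(ε)x. -/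
open scoped ENNReal

noncomputable section

/-- Cost `J_{d,γ1,γ2}(x,u) = Σ_{k<d} γ1^{γ2^k} ℓ(φ(k,x,u),u_k) + γ1^{γ2^d} ȷ(φ(d,x,u))`. -/
def cost {n m : ℕ} (f : (Fin n → ℝ) → (Fin m → ℝ) → Fin n → ℝ)
    (ℓ : (Fin n → ℝ) → (Fin m → ℝ) → ℝ≥0∞) (J : (Fin n → ℝ) → ℝ≥0∞)
    (d : ℕ) (γ1 γ2 : ℝ) (x : Fin n → ℝ) (u : ℕ → Fin m → ℝ) : ℝ≥0∞ :=
  (∑ k ∈ Finset.range d, ENNReal.ofReal (γ1 ^ (γ2 ^ k)) * ℓ (sol f u x k) (u k))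
    + ENNReal.ofReal (γ1 ^ (γ2 ^ d)) * J (sol f u x d)

/-- Optimal value function `V_{d,γ1,γ2}(x)`. -/
def val {n m : ℕ} (f : (Fin n → ℝ) → (Fin m → ℝ) → Fin n → ℝ)
    (ℓ : (Fin n → ℝ) → (Fin m → ℝ) → ℝ≥0∞) (J : (Fin n → ℝ) → ℝ≥0∞)
    (d : ℕ) (γ1 γ2 : ℝ) (x : Fin n → ℝ) : ℝ≥0∞ :=
  ⨅ u : ℕ → Fin m → ℝ, cost f ℓ J d γ1 γ2 x u

/-
Dilating the initial state by `λ^r(ε)` and every input by `λ^q(ε)` dilates the whole trajectory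
by `λ^r(ε)`, because `f` is homogeneous of degree one; the homogeneity of `ℓ` and `ȷ` then
scales every term of the cost by `ε^μ`. Since `λ^q(ε)` is invertible, the dilation of input
sequences is a bijection, so taking infima gives `V(λ^r(ε)x) = ε^μ V(x)`, and it maps optimal
sequences at `x` to optimal sequences at `λ^r(ε)x`.
-/

lemma dil_dil_inv {n : ℕ} (r : Fin n → ℝ) {ε : ℝ} (hε : 0 < ε) (x : Fin n → ℝ) :
    dil r ε (dil r ε⁻¹ x) = x := by
  funext i
  rw [dil, dil, Real.inv_rpow hε.le, ← mul_assoc,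
    mul_inv_cancel₀ (Real.rpow_pos_of_pos hε _).ne', one_mul]

lemma surjective_comp_dil {n : ℕ} (r : Fin n → ℝ) {ε : ℝ} (hε : 0 < ε) (ι : Type*) :
    Function.Surjective fun (u : ι → Fin n → ℝ) k => dil r ε (u k) :=
  fun v => ⟨fun k => dil r ε⁻¹ (v k), funext fun k => dil_dil_inv r hε (v k)⟩

section Homogeneous

variable {n m : ℕ} {f : (Fin n → ℝ) → (Fin m → ℝ) → Fin n → ℝ}
  {ℓ : (Fin n → ℝ) → (Fin m → ℝ) → ℝ≥0∞} {J : (Fin n → ℝ) → ℝ≥0∞}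
  {r : Fin n → ℝ} {q : Fin m → ℝ} {ε : ℝ} {c : ℝ≥0∞}

lemma sol_dil (hf : ∀ x u, f (dil r ε x) (dil q ε u) = dil r ε (f x u))
    (x : Fin n → ℝ) (u : ℕ → Fin m → ℝ) (k : ℕ) :
    sol f (fun k => dil q ε (u k)) (dil r ε x) k = dil r ε (sol f u x k) := by
  induction k with
  | zero => rfl
  | succ k ih => rw [sol, sol, ih, hf]

lemma cost_dil (hf : ∀ x u, f (dil r ε x) (dil q ε u) = dil r ε (f x u))
    (hℓ : ∀ x u, ℓ (dil r ε x) (dil q ε u) = c * ℓ x u)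
    (hJ : ∀ x, J (dil r ε x) = c * J x)
    (d : ℕ) (γ1 γ2 : ℝ) (x : Fin n → ℝ) (u : ℕ → Fin m → ℝ) :
    cost f ℓ J d γ1 γ2 (dil r ε x) (fun k => dil q ε (u k)) = c * cost f ℓ J d γ1 γ2 x u := by
  simp only [cost, sol_dil hf, hℓ, hJ, mul_add, Finset.mul_sum, mul_left_comm c]

lemma val_dil (hε : 0 < ε) (hf : ∀ x u, f (dil r ε x) (dil q ε u) = dil r ε (f x u))
    (hℓ : ∀ x u, ℓ (dil r ε x) (dil q ε u) = c * ℓ x u)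
    (hJ : ∀ x, J (dil r ε x) = c * J x) (hc : c ≠ ∞)
    (d : ℕ) (γ1 γ2 : ℝ) (x : Fin n → ℝ) :
    val f ℓ J d γ1 γ2 (dil r ε x) = c * val f ℓ J d γ1 γ2 x := by
  rw [val, val, ENNReal.mul_iInf fun hc_top => (hc hc_top).elim,
    ← (surjective_comp_dil q hε ℕ).iInf_comp]
  simp only [cost_dil hf hℓ hJ]

end Homogeneous

theorem stmt4_general {n m : ℕ} (f : (Fin n → ℝ) → (Fin m → ℝ) → Fin n → ℝ)
    (ℓ : (Fin n → ℝ) → (Fin m → ℝ) → ℝ≥0∞) (J : (Fin n → ℝ) → ℝ≥0∞)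
    (r : Fin n → ℝ) (q : Fin m → ℝ) (μ : ℝ)
    (hf : ∀ x u (ε : ℝ), 0 < ε → f (dil r ε x) (dil q ε u) = dil r ε (f x u))
    (hℓ : ∀ x u (ε : ℝ), 0 < ε →
      ℓ (dil r ε x) (dil q ε u) = ENNReal.ofReal (ε ^ μ) * ℓ x u)
    (hJ : ∀ x (ε : ℝ), 0 < ε → J (dil r ε x) = ENNReal.ofReal (ε ^ μ) * J x)
    (d : ℕ) :
    ∀ (x : Fin n → ℝ) (ε : ℝ), 0 < ε →
      val f ℓ J d 1 1 (dil r ε x) = ENNReal.ofReal (ε ^ μ) * val f ℓ J d 1 1 x ∧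
      ∀ ustar : ℕ → Fin m → ℝ,
        cost f ℓ J d 1 1 x ustar = val f ℓ J d 1 1 x →
        cost f ℓ J d 1 1 (dil r ε x) (fun k => dil q ε (ustar k))
          = val f ℓ J d 1 1 (dil r ε x) := by
  intro x ε hε
  have hfε := fun x u => hf x u ε hε
  have hℓε := fun x u => hℓ x u ε hε
  have hJε := fun x => hJ x ε hε
  have hval := val_dil hε hfε hℓε hJε ENNReal.ofReal_ne_top d 1 1 x
  refine ⟨hval, fun ustar hopt => ?_⟩
  rw [cost_dil hfε hℓε hJε, hopt, hval]

/-- Corollary (ν = 1 case): `V_{d,1,1}(λ^r(ε)x) = ε^μ V_{d,1,1}(x)` and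
`Λ^q_{1,d}(ε)u*` is optimal for `J_{d,1,1}` at `λ^r(ε)x`. -/
theorem stmt4 {n m : ℕ} (f : (Fin n → ℝ) → (Fin m → ℝ) → Fin n → ℝ)
    (ℓ : (Fin n → ℝ) → (Fin m → ℝ) → ℝ≥0∞) (J : (Fin n → ℝ) → ℝ≥0∞)
    (r : Fin n → ℝ) (q : Fin m → ℝ) (μ : ℝ)
    (hr : ∀ i, 0 < r i) (hq : ∀ j, 0 < q j)
    (hf : ∀ x u (ε : ℝ), 0 < ε → f (dil r ε x) (dil q ε u) = dil r ε (f x u))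
    (hℓ : ∀ x u (ε : ℝ), 0 < ε →
      ℓ (dil r ε x) (dil q ε u) = ENNReal.ofReal (ε ^ μ) * ℓ x u)
    (hJ : ∀ x (ε : ℝ), 0 < ε → J (dil r ε x) = ENNReal.ofReal (ε ^ μ) * J x)
    (d : ℕ) (hd : 0 < d)
    (hex : ∀ (γ1 γ2 : ℝ), 0 < γ1 → ∀ x : Fin n → ℝ,
      ∃ u, cost f ℓ J d γ1 γ2 x u = val f ℓ J d γ1 γ2 x ∧ cost f ℓ J d γ1 γ2 x u ≠ ⊤) :
    ∀ (x : Fin n → ℝ) (ε : ℝ), 0 < ε →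
      val f ℓ J d 1 1 (dil r ε x) = ENNReal.ofReal (ε ^ μ) * val f ℓ J d 1 1 x ∧
      ∀ ustar : ℕ → Fin m → ℝ,
        cost f ℓ J d 1 1 x ustar = val f ℓ J d 1 1 x →
        cost f ℓ J d 1 1 (dil r ε x) (fun k => dil q ε (ustar k))
          = val f ℓ J d 1 1 (dil r ε x) :=
  stmt4_general f ℓ J r q μ hf hℓ hJ d
end
end

section
/- (Soundness of the homogeneous value-iteration bounds.) Let f be homogeneous of degree ν > 0 and ℓ homogeneous of degree μ with respect to (λ^r, λ^q). Let D ⊂ ℝ^n \ {0} be a set such that every nonzero state lies on the homogeneous ray of some point of D. Define V_i by standard value iteration V_{i+1}(x) = min_u [ℓ(x,u) + V_i(f(x,u))], and define V̲_i, V̄_i by: V̲_0 = V̄_0 = V_0 where V_0 is homogeneous of degree μ; for x ∈ D, V̲_{i+1}(x) = V̄_{i+1}(x) = min_u [ℓ(x,u) + V̲_i(f(x,u))] and min_u [ℓ(x,u) + V̄_i(f(x,u))] respectively, and for ε > 0, V̲_{i+1}(λ^r(ε)x) = min{ε^μ, ε^{μ ν^{i+1}}} V̲_{i+1}(x) and V̄_{i+1}(λ^r(ε)x)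 = max{ε^μ, ε^{μ ν^{i+1}}} V̄_{i+1}(x), with all three functions vanishing at 0. Then for every i ≥ 0 and every x ∈ ℝ^n, V̲_i(x) ≤ V_i(x) ≤ V̄_i(x). -/
open scoped ENNReal

noncomputable section

/-- If `a` lies between `b` and `c`, then `ε ^ a` lies between `min (ε^b) (ε^c)`
and `max (ε^b) (ε^c)`. -/
lemma rpow_between_of_between {ε a b c : ℝ} (hε : 0 < ε) (h1 : min b c ≤ a) (h2 : a ≤ max b c) :
    min (ε ^ b) (ε ^ c) ≤ ε ^ a ∧ ε ^ a ≤ max (ε ^ b) (ε ^ c) := by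
  rcases le_total ε 1 with h | h
  · refine ⟨?_, ?_⟩
    · refine le_trans ?_ (Real.rpow_le_rpow_of_exponent_ge hε h h2)
      rcases le_total b c with hbc | hbc
      · rw [max_eq_right hbc]; exact min_le_right _ _
      · rw [max_eq_left hbc]; exact min_le_left _ _
    · refine le_trans (Real.rpow_le_rpow_of_exponent_ge hε h h1) ?_
      rcases le_total b c with hbc | hbc
      · rw [min_eq_left hbc]; exact le_max_left _ _
      · rw [min_eq_right hbc]; exact le_max_right _ _
  · refine ⟨?_, ?_⟩
    · refine le_trans ?_ (Real.rpow_le_rpow_of_exponent_le h h1)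
      rcases le_total b c with hbc | hbc
      · rw [min_eq_left hbc]; exact min_le_left _ _
      · rw [min_eq_right hbc]; exact min_le_right _ _
    · refine le_trans (Real.rpow_le_rpow_of_exponent_le h h2) ?_
      rcases le_total b c with hbc | hbc
      · rw [max_eq_right hbc]; exact le_max_right _ _
      · rw [max_eq_left hbc]; exact le_max_left _ _

/-- `μ * ν` lies between `μ` and `μ * ν ^ (i+1)`. -/
lemma mul_pow_between {ν μ : ℝ} (hν : 0 < ν) (i : ℕ) :
    min μ (μ * ν ^ (i + 1)) ≤ μ * ν ∧ μ * ν ≤ max μ (μ * ν ^ (i + 1)) := by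
  have key : (ν ^ (i + 1) ≤ ν ∧ ν ≤ 1) ∨ (ν ≤ ν ^ (i + 1) ∧ 1 ≤ ν) := by
    rcases le_total ν 1 with h | h
    · left
      refine ⟨?_, h⟩
      have h1 : ν ^ i ≤ 1 := pow_le_one₀ hν.le h
      calc ν ^ (i + 1) = ν ^ i * ν := by ring
        _ ≤ 1 * ν := by nlinarith
        _ = ν := one_mul ν
    · right
      refine ⟨?_, h⟩
      calc ν = ν ^ 1 := (pow_one ν).symm
        _ ≤ ν ^ (i + 1) := pow_le_pow_right₀ h (by omega)
  rcases le_total 0 μ with hμ | hμ <;> rcases key with ⟨h1, h2⟩ | ⟨h1, h2⟩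
  · exact ⟨min_le_of_right_le (by nlinarith), le_max_of_le_left (by nlinarith)⟩
  · exact ⟨min_le_of_left_le (by nlinarith), le_max_of_le_right (by nlinarith)⟩
  · exact ⟨min_le_of_left_le (by nlinarith), le_max_of_le_right (by nlinarith)⟩
  · exact ⟨min_le_of_right_le (by nlinarith), le_max_of_le_left (by nlinarith)⟩

theorem stmt7 {n m : ℕ}
    (f : (Fin n → ℝ) → (Fin m → ℝ) → Fin n → ℝ)
    (ℓ : (Fin n → ℝ) → (Fin m → ℝ) → ℝ≥0∞)
    (r : Fin n → ℝ) (q : Fin m → ℝ) (ν μ : ℝ)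
    (hr : ∀ i, 0 < r i) (hq : ∀ j, 0 < q j) (hν : 0 < ν)
    (hf : ∀ x u (ε : ℝ), 0 < ε → f (dil r ε x) (dil q ε u) = dilPow r ε ν (f x u))
    (hℓ : ∀ x u (ε : ℝ), 0 < ε →
      ℓ (dil r ε x) (dil q ε u) = ENNReal.ofReal (ε ^ μ) * ℓ x u)
    (D : Set (Fin n → ℝ)) (hD0 : (0 : Fin n → ℝ) ∉ D)
    (hDcov : ∀ x : Fin n → ℝ, x ≠ 0 → ∃ y ∈ D, ∃ ε : ℝ, 0 < ε ∧ x = dil r ε y)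
    (V Vlo Vhi : ℕ → (Fin n → ℝ) → ℝ≥0∞)
    (hV0hom : ∀ x (ε : ℝ), 0 < ε → V 0 (dil r ε x) = ENNReal.ofReal (ε ^ μ) * V 0 x)
    (hlo0 : Vlo 0 = V 0) (hhi0 : Vhi 0 = V 0)
    (hV : ∀ i x, V (i + 1) x = ⨅ u : Fin m → ℝ, ℓ x u + V i (f x u))
    (hloD : ∀ i, ∀ x ∈ D, Vlo (i + 1) x = ⨅ u : Fin m → ℝ, ℓ x u + Vlo i (f x u))
    (hhiD : ∀ i, ∀ x ∈ D, Vhi (i + 1) x = ⨅ u : Fin m → ℝ, ℓ x u + Vhi i (f x u))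
    (hloScale : ∀ i, ∀ x ∈ D, ∀ ε : ℝ, 0 < ε →
      Vlo (i + 1) (dil r ε x)
        = ENNReal.ofReal (min (ε ^ μ) (ε ^ (μ * ν ^ (i + 1)))) * Vlo (i + 1) x)
    (hhiScale : ∀ i, ∀ x ∈ D, ∀ ε : ℝ, 0 < ε →
      Vhi (i + 1) (dil r ε x)
        = ENNReal.ofReal (max (ε ^ μ) (ε ^ (μ * ν ^ (i + 1)))) * Vhi (i + 1) x)
    (hzero : ∀ i, V i 0 = 0 ∧ Vlo i 0 = 0 ∧ Vhi i 0 = 0) :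
    ∀ (i : ℕ) (x : Fin n → ℝ), Vlo i x ≤ V i x ∧ V i x ≤ Vhi i x := by
  classical
  have hεpos : ∀ (ε a : ℝ), 0 < ε → 0 < ε ^ a := fun ε a h => Real.rpow_pos_of_pos h a
  -- homogeneity sandwich for the true value iterates
  have Hhom : ∀ i x (ε : ℝ), 0 < ε →
      ENNReal.ofReal (min (ε ^ μ) (ε ^ (μ * ν ^ i))) * V i x ≤ V i (dil r ε x) ∧
      V i (dil r ε x) ≤ ENNReal.ofReal (max (ε ^ μ) (ε ^ (μ * ν ^ i))) * V i x := by
    intro i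
    induction i with
    | zero =>
      intro x ε hε
      simp only [pow_zero, mul_one, min_self, max_self, hV0hom x ε hε, le_refl, and_self]
    | succ i ih =>
      intro x ε hε
      have hεν : 0 < ε ^ ν := hεpos ε ν hε
      have hsur : Function.Surjective (dil q ε) := by
        intro u
        refine ⟨dil q ε⁻¹ u, ?_⟩
        funext j
        have h1 : (ε : ℝ) ^ q j ≠ 0 := ne_of_gt (hεpos ε (q j) hε)
        simp only [dil, Real.inv_rpow hε.le]
        field_simp
      have hdp : ∀ y, dilPow r ε ν y = dil r (ε ^ ν) y := by
        intro y; funext j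
        simp only [dilPow, dil]
        rw [Real.rpow_mul hε.le]
      have key : V (i + 1) (dil r ε x)
          = ⨅ u : Fin m → ℝ,
              (ENNReal.ofReal (ε ^ μ) * ℓ x u + V i (dil r (ε ^ ν) (f x u))) := by
        rw [hV i (dil r ε x), ← hsur.iInf_comp]
        exact iInf_congr fun u => by rw [hℓ x u ε hε, hf x u ε hε, hdp]
      have hexp1 : (ε ^ ν) ^ μ = ε ^ (μ * ν) := by
        rw [← Real.rpow_mul hε.le, mul_comm]
      have hexp2 : (ε ^ ν) ^ (μ * ν ^ i) = ε ^ (μ * ν ^ (i + 1)) := by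
        rw [← Real.rpow_mul hε.le]
        congr 1
        ring
      have hbet := rpow_between_of_between (a := μ * ν) (b := μ) (c := μ * ν ^ (i + 1)) hε
        (mul_pow_between hν i).1 (mul_pow_between hν i).2
      constructor
      · set c := min (ε ^ μ) (ε ^ (μ * ν ^ (i + 1))) with hc
        have hcμ : c ≤ ε ^ μ := min_le_left _ _
        have hcmin : c ≤ min ((ε ^ ν) ^ μ) ((ε ^ ν) ^ (μ * ν ^ i)) := by
          rw [hexp1, hexp2]
          exact le_min hbet.1 (min_le_right _ _)
        rw [key, hV i x]
        refine le_iInf fun u => ?_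
        calc ENNReal.ofReal c * ⨅ u : Fin m → ℝ, (ℓ x u + V i (f x u))
            ≤ ENNReal.ofReal c * (ℓ x u + V i (f x u)) :=
              mul_le_mul_right (iInf_le _ u) _
          _ = ENNReal.ofReal c * ℓ x u + ENNReal.ofReal c * V i (f x u) := mul_add _ _ _
          _ ≤ ENNReal.ofReal (ε ^ μ) * ℓ x u + V i (dil r (ε ^ ν) (f x u)) := by
              refine add_le_add (mul_le_mul_left (ENNReal.ofReal_le_ofReal hcμ) _) ?_
              exact le_trans (mul_le_mul_left (ENNReal.ofReal_le_ofReal hcmin) _)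
                (ih (f x u) (ε ^ ν) hεν).1
      · set C := max (ε ^ μ) (ε ^ (μ * ν ^ (i + 1))) with hC
        have hCμ : ε ^ μ ≤ C := le_max_left _ _
        have hCmax : max ((ε ^ ν) ^ μ) ((ε ^ ν) ^ (μ * ν ^ i)) ≤ C := by
          rw [hexp1, hexp2]
          exact max_le hbet.2 (le_max_right _ _)
        rw [key, hV i x]
        calc (⨅ u : Fin m → ℝ,
                (ENNReal.ofReal (ε ^ μ) * ℓ x u + V i (dil r (ε ^ ν) (f x u))))
            ≤ ⨅ u : Fin m → ℝ, ENNReal.ofReal C * (ℓ x u + V i (f x u)) := by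
              refine iInf_mono fun u => ?_
              rw [mul_add]
              refine add_le_add (mul_le_mul_left (ENNReal.ofReal_le_ofReal hCμ) _) ?_
              exact le_trans (ih (f x u) (ε ^ ν) hεν).2
                (mul_le_mul_left (ENNReal.ofReal_le_ofReal hCmax) _)
          _ = ENNReal.ofReal C * ⨅ u : Fin m → ℝ, (ℓ x u + V i (f x u)) :=
              (ENNReal.mul_iInf (fun h => absurd h ENNReal.ofReal_ne_top)).symm
  intro i
  induction i with
  | zero =>
    intro x
    rw [hlo0, hhi0]
    exact ⟨le_refl _, le_refl _⟩
  | succ i ih =>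
    intro x
    by_cases hx : x = 0
    · subst hx
      obtain ⟨h1, h2, h3⟩ := hzero (i + 1)
      rw [h1, h2, h3]
      exact ⟨le_refl _, le_refl _⟩
    · obtain ⟨y, hyD, ε, hε, rfl⟩ := hDcov x hx
      have hloy : Vlo (i + 1) y ≤ V (i + 1) y := by
        rw [hloD i y hyD, hV i y]
        exact iInf_mono fun u => add_le_add_right (ih (f y u)).1 _
      have hhiy : V (i + 1) y ≤ Vhi (i + 1) y := by
        rw [hhiD i y hyD, hV i y]
        exact iInf_mono fun u => add_le_add_right (ih (f y u)).2 _
      constructor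
      · rw [hloScale i y hyD ε hε]
        exact le_trans (mul_le_mul_right hloy _) (Hhom (i + 1) y ε hε).1
      · rw [hhiScale i y hyD ε hε]
        exact le_trans (Hhom (i + 1) y ε hε).2 (mul_le_mul_right hhiy _)
end
end

section
/- In the homogeneous value-iteration scheme, if the stage cost has homogeneity degree μ = 0 or the dynamics has homogeneity degree ν = 1, then the bounds are exact: V̲_i(x) = V_i(x) = V̄_i(x) for every iteration i and every state x. -/
/-! When `μ = 0` or `ν = 1` we have `ν * μ = μ`, so the Bellman operator maps `μ`-homogeneous
functions to `μ`-homogeneous functions and every `V i` is `μ`-homogeneous; moreover both scaling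
factors `min {ε^μ, ε^(μ ν^(i+1))}` and `max {ε^μ, ε^(μ ν^(i+1))}` collapse to `ε^μ`. By induction,
`V̲_i`, `V_i`, `V̄_i` then satisfy the same recursion on `D`, agree at `0`, and extend from `D` along
rays by the same factor `ε^μ`, so they coincide everywhere. -/

open scoped ENNReal

noncomputable section

namespace HomogeneousValueIteration

variable {n m : ℕ}

lemma dil_dil (r : Fin n → ℝ) {a b : ℝ} (ha : 0 ≤ a) (hb : 0 ≤ b) (x : Fin n → ℝ) :
    dil r a (dil r b x) = dil r (a * b) x := by
  funext i
  simp only [dil, Real.mul_rpow ha hb]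
  ring

lemma dil_one (r : Fin n → ℝ) (x : Fin n → ℝ) : dil r 1 x = x := by
  funext i
  simp [dil]

lemma dil_surjective (r : Fin n → ℝ) {ε : ℝ} (hε : 0 < ε) : Function.Surjective (dil r ε) :=
  fun x => ⟨dil r ε⁻¹ x, by rw [dil_dil r hε.le (inv_nonneg.2 hε.le), mul_inv_cancel₀ hε.ne',
    dil_one]⟩

lemma dilPow_eq_dil (r : Fin n → ℝ) {ε : ℝ} (hε : 0 ≤ ε) (c : ℝ) (x : Fin n → ℝ) :
    dilPow r ε c x = dil r (ε ^ c) x := by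
  funext i
  simp only [dilPow, dil, Real.rpow_mul hε]

def IsHomog (r : Fin n → ℝ) (κ : ℝ) (W : (Fin n → ℝ) → ℝ≥0∞) : Prop :=
  ∀ x (ε : ℝ), 0 < ε → W (dil r ε x) = ENNReal.ofReal (ε ^ κ) * W x

variable {f : (Fin n → ℝ) → (Fin m → ℝ) → Fin n → ℝ} {ℓ : (Fin n → ℝ) → (Fin m → ℝ) → ℝ≥0∞}
  {r : Fin n → ℝ} {q : Fin m → ℝ} {ν μ κ : ℝ}

lemma IsHomog.bellman {W : (Fin n → ℝ) → ℝ≥0∞} (hW : IsHomog r κ W) (hνκ : ν * κ = μ)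
    (hf : ∀ x u (ε : ℝ), 0 < ε → f (dil r ε x) (dil q ε u) = dilPow r ε ν (f x u))
    (hℓ : ∀ x u (ε : ℝ), 0 < ε → ℓ (dil r ε x) (dil q ε u) = ENNReal.ofReal (ε ^ μ) * ℓ x u) :
    IsHomog r μ (fun x => ⨅ u, ℓ x u + W (f x u)) := by
  intro x ε hε
  have hstage : ∀ u, ℓ (dil r ε x) (dil q ε u) + W (f (dil r ε x) (dil q ε u))
      = ENNReal.ofReal (ε ^ μ) * (ℓ x u + W (f x u)) := fun u => by
    rw [hℓ x u ε hε, hf x u ε hε, dilPow_eq_dil r hε.le, hW _ _ (Real.rpow_pos_of_pos hε ν),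
      ← Real.rpow_mul hε.le, hνκ, mul_add]
  have hfactor : ENNReal.ofReal (ε ^ μ) ≠ 0 := by
    simpa using Real.rpow_pos_of_pos hε μ
  beta_reduce
  rw [← (dil_surjective q hε).iInf_comp (g := fun u => ℓ (dil r ε x) u + W (f (dil r ε x) u))]
  simp only [hstage]
  exact (ENNReal.mul_iInf_of_ne hfactor ENNReal.ofReal_ne_top).symm

lemma isHomog_valueIteration {V : ℕ → (Fin n → ℝ) → ℝ≥0∞} (hνμ : ν * μ = μ)
    (hf : ∀ x u (ε : ℝ), 0 < ε → f (dil r ε x) (dil q ε u) = dilPow r ε ν (f x u))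
    (hℓ : ∀ x u (ε : ℝ), 0 < ε → ℓ (dil r ε x) (dil q ε u) = ENNReal.ofReal (ε ^ μ) * ℓ x u)
    (hV0 : IsHomog r μ (V 0)) (hV : ∀ i x, V (i + 1) x = ⨅ u, ℓ x u + V i (f x u)) (i : ℕ) :
    IsHomog r μ (V i) := by
  induction i with
  | zero => exact hV0
  | succ i ih =>
    rw [show V (i + 1) = fun x => ⨅ u, ℓ x u + V i (f x u) from funext (hV i)]
    exact ih.bellman hνμ hf hℓ

lemma eq_of_eqOn_of_isHomog {D : Set (Fin n → ℝ)}
    (hDcov : ∀ x : Fin n → ℝ, x ≠ 0 → ∃ y ∈ D, ∃ ε : ℝ, 0 < ε ∧ x = dil r ε y)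
    {W W' : (Fin n → ℝ) → ℝ≥0∞} (h0 : W 0 = W' 0) (hD : Set.EqOn W W' D)
    (hW : ∀ y ∈ D, ∀ ε : ℝ, 0 < ε → W (dil r ε y) = ENNReal.ofReal (ε ^ μ) * W y)
    (hW' : IsHomog r μ W') : W = W' := by
  funext x
  rcases eq_or_ne x 0 with rfl | hx
  · exact h0
  · obtain ⟨y, hy, ε, hε, rfl⟩ := hDcov x hx
    rw [hW y hy ε hε, hD hy, hW' y ε hε]

end HomogeneousValueIteration

open HomogeneousValueIteration

theorem stmt8_general {n m : ℕ}
    (f : (Fin n → ℝ) → (Fin m → ℝ) → Fin n → ℝ)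
    (ℓ : (Fin n → ℝ) → (Fin m → ℝ) → ℝ≥0∞)
    (r : Fin n → ℝ) (q : Fin m → ℝ) (ν μ : ℝ)
    (hf : ∀ x u (ε : ℝ), 0 < ε → f (dil r ε x) (dil q ε u) = dilPow r ε ν (f x u))
    (hℓ : ∀ x u (ε : ℝ), 0 < ε →
      ℓ (dil r ε x) (dil q ε u) = ENNReal.ofReal (ε ^ μ) * ℓ x u)
    (D : Set (Fin n → ℝ))
    (hDcov : ∀ x : Fin n → ℝ, x ≠ 0 → ∃ y ∈ D, ∃ ε : ℝ, 0 < ε ∧ x = dil r ε y)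
    (V Vlo Vhi : ℕ → (Fin n → ℝ) → ℝ≥0∞)
    (hV0hom : ∀ x (ε : ℝ), 0 < ε → V 0 (dil r ε x) = ENNReal.ofReal (ε ^ μ) * V 0 x)
    (hlo0 : Vlo 0 = V 0) (hhi0 : Vhi 0 = V 0)
    (hV : ∀ i x, V (i + 1) x = ⨅ u : Fin m → ℝ, ℓ x u + V i (f x u))
    (hloD : ∀ i, ∀ x ∈ D, Vlo (i + 1) x = ⨅ u : Fin m → ℝ, ℓ x u + Vlo i (f x u))
    (hhiD : ∀ i, ∀ x ∈ D, Vhi (i + 1) x = ⨅ u : Fin m → ℝ, ℓ x u + Vhi i (f x u))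
    (hloScale : ∀ i, ∀ x ∈ D, ∀ ε : ℝ, 0 < ε →
      Vlo (i + 1) (dil r ε x)
        = ENNReal.ofReal (min (ε ^ μ) (ε ^ (μ * ν ^ (i + 1)))) * Vlo (i + 1) x)
    (hhiScale : ∀ i, ∀ x ∈ D, ∀ ε : ℝ, 0 < ε →
      Vhi (i + 1) (dil r ε x)
        = ENNReal.ofReal (max (ε ^ μ) (ε ^ (μ * ν ^ (i + 1)))) * Vhi (i + 1) x)
    (hzero : ∀ i, V i 0 = 0 ∧ Vlo i 0 = 0 ∧ Vhi i 0 = 0)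
    (hspecial : μ = 0 ∨ ν = 1) :
    ∀ (i : ℕ) (x : Fin n → ℝ), Vlo i x = V i x ∧ V i x = Vhi i x := by
  have hνμ : ν * μ = μ := by rcases hspecial with rfl | rfl <;> simp
  have hexp : ∀ i : ℕ, μ * ν ^ (i + 1) = μ := by rcases hspecial with rfl | rfl <;> simp
  have hVhom := isHomog_valueIteration hνμ hf hℓ hV0hom hV
  suffices h : ∀ i, Vlo i = V i ∧ Vhi i = V i from
    fun i x => ⟨congrFun (h i).1 x, (congrFun (h i).2 x).symm⟩
  intro i
  induction i with
  | zero => exact ⟨hlo0, hhi0⟩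
  | succ i ih =>
    obtain ⟨hV_zero, hlo_zero, hhi_zero⟩ := hzero (i + 1)
    constructor
    · refine eq_of_eqOn_of_isHomog hDcov (hlo_zero.trans hV_zero.symm) (fun y hy => ?_)
        (fun y hy ε hε => ?_) (hVhom (i + 1))
      · rw [hloD i y hy, hV, ih.1]
      · rw [hloScale i y hy ε hε, hexp, min_self]
    · refine eq_of_eqOn_of_isHomog hDcov (hhi_zero.trans hV_zero.symm) (fun y hy => ?_)
        (fun y hy ε hε => ?_) (hVhom (i + 1))
      · rw [hhiD i y hy, hV, ih.2]
      · rw [hhiScale i y hy ε hε, hexp, max_self]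

theorem stmt8 {n m : ℕ}
    (f : (Fin n → ℝ) → (Fin m → ℝ) → Fin n → ℝ)
    (ℓ : (Fin n → ℝ) → (Fin m → ℝ) → ℝ≥0∞)
    (r : Fin n → ℝ) (q : Fin m → ℝ) (ν μ : ℝ)
    (hr : ∀ i, 0 < r i) (hq : ∀ j, 0 < q j) (hν : 0 < ν)
    (hf : ∀ x u (ε : ℝ), 0 < ε → f (dil r ε x) (dil q ε u) = dilPow r ε ν (f x u))
    (hℓ : ∀ x u (ε : ℝ), 0 < ε →
      ℓ (dil r ε x) (dil q ε u) = ENNReal.ofReal (ε ^ μ) * ℓ x u)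
    (D : Set (Fin n → ℝ)) (hD0 : (0 : Fin n → ℝ) ∉ D)
    (hDcov : ∀ x : Fin n → ℝ, x ≠ 0 → ∃ y ∈ D, ∃ ε : ℝ, 0 < ε ∧ x = dil r ε y)
    (V Vlo Vhi : ℕ → (Fin n → ℝ) → ℝ≥0∞)
    (hV0hom : ∀ x (ε : ℝ), 0 < ε → V 0 (dil r ε x) = ENNReal.ofReal (ε ^ μ) * V 0 x)
    (hlo0 : Vlo 0 = V 0) (hhi0 : Vhi 0 = V 0)
    (hV : ∀ i x, V (i + 1) x = ⨅ u : Fin m → ℝ, ℓ x u + V i (f x u))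
    (hloD : ∀ i, ∀ x ∈ D, Vlo (i + 1) x = ⨅ u : Fin m → ℝ, ℓ x u + Vlo i (f x u))
    (hhiD : ∀ i, ∀ x ∈ D, Vhi (i + 1) x = ⨅ u : Fin m → ℝ, ℓ x u + Vhi i (f x u))
    (hloScale : ∀ i, ∀ x ∈ D, ∀ ε : ℝ, 0 < ε →
      Vlo (i + 1) (dil r ε x)
        = ENNReal.ofReal (min (ε ^ μ) (ε ^ (μ * ν ^ (i + 1)))) * Vlo (i + 1) x)
    (hhiScale : ∀ i, ∀ x ∈ D, ∀ ε : ℝ, 0 < ε →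
      Vhi (i + 1) (dil r ε x)
        = ENNReal.ofReal (max (ε ^ μ) (ε ^ (μ * ν ^ (i + 1)))) * Vhi (i + 1) x)
    (hzero : ∀ i, V i 0 = 0 ∧ Vlo i 0 = 0 ∧ Vhi i 0 = 0)
    (hspecial : μ = 0 ∨ ν = 1) :
    ∀ (i : ℕ) (x : Fin n → ℝ), Vlo i x = V i x ∧ V i x = Vhi i x :=
  stmt8_general f ℓ r q ν μ hf hℓ D hDcov V Vlo Vhi hV0hom hlo0 hhi0 hV hloD hhiD hloScale hhiScale
    hzero hspecial
end
end

section
/- (Homogenization via an auxiliary variable.) Let r ∈ ℝ_{>0}^n, q ∈ ℝ_{>0}^m, and suppose each component f_i(x,u) = Σ_{j=0}^{N} g_{i,j}(x,u) where each g_{i,j} is homogeneous of degree ν_{i,j} with respect to (λ^r, λ^q), i.e., g_{i,j}(λ^r(ε)x, λ^q(ε)u) = ε^{ν_{i,j}} g_{i,j}(x,u). Set ν := 1 + max_{i,j} ν_{i,j}/r_i (assumed a positive integer). Then the extended vector field f̃ on ℝ^{n+1} defined by f̃_i(x,w,u) = Σ_j w^{(r_i ν − ν_{i,j})ν} g_{i,j}(x,u)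 for i ≤ n and f̃_{n+1}(x,w,u) = sign(w)|w|^ν satisfies f̃(λ^{(r,1/ν)}(ε)(x,w), λ^q(ε)u) = λ^{(r,1/ν)}(ε)^ν f̃(x,w,u), i.e., f̃ is homogeneous of degree ν with respect to the dilation pair (λ^{(r,1/ν)}, λ^q). -/
/-!
Each summand of the extended field is the product of `g i j`, which scales by `ε ^ νd i j`, and
the weight `w ^ ((r i * ν - νd i j) * ν)`, which under `w ↦ ε ^ (1 / ν) * w` scales by
`ε ^ (r i * ν - νd i j)`; the exponents add up to `r i * ν` independently of `j`. The last
component scales by `ε ^ ((1 / ν) * ν)` because the signed power is multiplicative in a positive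
factor.
-/

noncomputable section

/-- Signed power `⌈w⌋^a = sign(w)|w|^a`. -/
def spow (w a : ℝ) : ℝ := Real.sign w * |w| ^ a

namespace Real

/-- For `x < 0`, `x ^ a = exp (log x * a) * cos (a * π)`, and `log` is additive on nonzero
factors. -/
lemma mul_rpow_of_pos_left {c : ℝ} (hc : 0 < c) (x a : ℝ) :
    (c * x) ^ a = c ^ a * x ^ a := by
  rcases lt_trichotomy x 0 with hx | rfl | hx
  · rw [rpow_def_of_neg (mul_neg_of_pos_of_neg hc hx), rpow_def_of_neg hx, rpow_def_of_pos hc,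
      log_mul hc.ne' hx.ne, add_mul, exp_add]
    ring
  · rcases eq_or_ne a 0 with rfl | ha
    · simp
    · simp [zero_rpow ha]
  · exact mul_rpow hc.le hx.le

lemma sign_mul_of_pos_left {c : ℝ} (hc : 0 < c) (w : ℝ) : sign (c * w) = sign w := by
  rcases lt_trichotomy w 0 with hw | rfl | hw
  · rw [sign_of_neg hw, sign_of_neg (mul_neg_of_pos_of_neg hc hw)]
  · simp
  · rw [sign_of_pos hw, sign_of_pos (mul_pos hc hw)]

lemma rpow_one_div_mul_rpow_mul {ε : ℝ} (hε : 0 < ε) {ν : ℝ} (hν : ν ≠ 0) (w a : ℝ) :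
    (ε ^ (1 / ν) * w) ^ (a * ν) = ε ^ a * w ^ (a * ν) := by
  rw [mul_rpow_of_pos_left (rpow_pos_of_pos hε _), ← rpow_mul hε.le]
  congr 2
  field_simp

end Real

lemma spow_mul_of_pos_left {c : ℝ} (hc : 0 < c) (w a : ℝ) :
    spow (c * w) a = c ^ a * spow w a := by
  rw [spow, spow, Real.sign_mul_of_pos_left hc, abs_mul, abs_of_pos hc,
    Real.mul_rpow hc.le (abs_nonneg w)]
  ring

lemma weighted_term_homogeneous {ε : ℝ} (hε : 0 < ε) {ν : ℝ} (hν : ν ≠ 0) (w s d G : ℝ) :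
    (ε ^ (1 / ν) * w) ^ ((s - d) * ν) * (ε ^ d * G) = ε ^ s * (w ^ ((s - d) * ν) * G) := by
  rw [Real.rpow_one_div_mul_rpow_mul hε hν]
  calc ε ^ (s - d) * w ^ ((s - d) * ν) * (ε ^ d * G)
      = (ε ^ (s - d) * ε ^ d) * (w ^ ((s - d) * ν) * G) := by ring
    _ = ε ^ s * (w ^ ((s - d) * ν) * G) := by rw [← Real.rpow_add hε, sub_add_cancel]

theorem stmt9_general {n m N : ℕ}
    (g : Fin n → Fin (N + 1) → (Fin n → ℝ) → (Fin m → ℝ) → ℝ)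
    (νd : Fin n → Fin (N + 1) → ℝ)
    (r : Fin n → ℝ) (q : Fin m → ℝ)
    (hg : ∀ i j x u (ε : ℝ), 0 < ε →
      g i j (dil r ε x) (dil q ε u) = ε ^ (νd i j) * g i j x u)
    (ν : ℝ)
    (hνint : ∃ k : ℕ, 0 < k ∧ ν = (k : ℝ)) :
    ∀ (x : Fin n → ℝ) (w : ℝ) (u : Fin m → ℝ) (ε : ℝ), 0 < ε →
      (∀ i, (∑ j, (ε ^ (1 / ν) * w) ^ ((r i * ν - νd i j) * ν)
                * g i j (dil r ε x) (dil q ε u))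
          = ε ^ (r i * ν) * ∑ j, w ^ ((r i * ν - νd i j) * ν) * g i j x u)
      ∧ spow (ε ^ (1 / ν) * w) ν = ε ^ ((1 / ν) * ν) * spow w ν := by
  obtain ⟨k, hk, rfl⟩ := hνint
  have hν : (k : ℝ) ≠ 0 := by exact_mod_cast hk.ne'
  intro x w u ε hε
  refine ⟨fun i => ?_, ?_⟩
  · rw [Finset.mul_sum]
    refine Finset.sum_congr rfl fun j _ => ?_
    rw [hg i j x u ε hε, weighted_term_homogeneous hε hν]
  · rw [spow_mul_of_pos_left (Real.rpow_pos_of_pos hε _), ← Real.rpow_mul hε.le]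

theorem stmt9 {n m N : ℕ}
    (g : Fin n → Fin (N + 1) → (Fin n → ℝ) → (Fin m → ℝ) → ℝ)
    (νd : Fin n → Fin (N + 1) → ℝ)
    (r : Fin n → ℝ) (q : Fin m → ℝ)
    (hr : ∀ i, 0 < r i) (hq : ∀ j, 0 < q j)
    (hg : ∀ i j x u (ε : ℝ), 0 < ε →
      g i j (dil r ε x) (dil q ε u) = ε ^ (νd i j) * g i j x u)
    (ν : ℝ)
    (hνub : ∀ i j, νd i j / r i ≤ ν - 1)
    (hνmax : ∃ i j, ν = 1 + νd i j / r i)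
    (hνint : ∃ k : ℕ, 0 < k ∧ ν = (k : ℝ)) :
    ∀ (x : Fin n → ℝ) (w : ℝ) (u : Fin m → ℝ) (ε : ℝ), 0 < ε →
      (∀ i, (∑ j, (ε ^ (1 / ν) * w) ^ ((r i * ν - νd i j) * ν)
                * g i j (dil r ε x) (dil q ε u))
          = ε ^ (r i * ν) * ∑ j, w ^ ((r i * ν - νd i j) * ν) * g i j x u)
      ∧ spow (ε ^ (1 / ν) * w) ν = ε ^ ((1 / ν) * ν) * spow w ν :=
  stmt9_general g νd r q hg ν hνint
end
end
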